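/- For any r ≥ 1 and any subgraph H of the complete bipartite graph K_{2,r}, we have χ_gb(H) ≤ 3. -/

import Mathlib

open Function

namespace GameCol

variable {V : Type*} [Fintype V] [DecidableEq V]

/-- A finite set of vertices is independent in `G`. -/
def IsIndepF (G : SimpleGraph V) (s : Finset V) : Prop :=
  ∀ u ∈ s, ∀ v ∈ s, ¬ G.Adj u v

/-! ### The vertex colouring game.

A position is a partial proper colouring `f : V → Option ℕ` (`none` = uncoloured);
the palette consists of the `k` colours `0, …, k-1`.  The `Bool` records whose turn
it is (`true` = Maker).  Players alternate, Maker moving first, always making a legal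
move if one exists; the game ends when the player to move has no legal move, and
Maker wins if and only if the whole graph is then coloured. -/

/-- Colour `c` may legally be played at `v`. -/
def ColLegal (G : SimpleGraph V) (k : ℕ) (f : V → Option ℕ) (v : V) (c : ℕ) : Prop :=
  c < k ∧ f v = none ∧ ∀ u, G.Adj v u → f u ≠ some c

/-- Every vertex is coloured. -/
def FullC (f : V → Option ℕ) : Prop := ∀ v, f v ≠ none

/-- Maker wins the vertex colouring game from the given position with optimal play
(`fuel` is an upper bound on the number of remaining moves). -/
def MakerWinsC (G : SimpleGraph V) (k : ℕ) : ℕ → (V → Option ℕ) → Bool → Prop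
  | 0, f, _ => FullC f
  | fuel + 1, f, true => FullC f ∨
      ∃ v c, ColLegal G k f v c ∧ MakerWinsC G k fuel (update f v (some c)) false
  | fuel + 1, f, false => FullC f ∨
      ((∃ v c, ColLegal G k f v c) ∧
        ∀ v c, ColLegal G k f v c → MakerWinsC G k fuel (update f v (some c)) true)

/-- The game chromatic number `χ_g(G)`: the least number of colours for which Maker
has a winning strategy in the vertex colouring game. -/
noncomputable def gameChromaticNumber (G : SimpleGraph V) : ℕ :=
  sInf {k | MakerWinsC G k (Fintype.card V) (fun _ => none) true}

/-! ### The vertex colouring game with blanks.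

Positions are `f : V → Option (Option ℕ)`: `none` = unplayed, `some none` = blank,
`some (some c)` = coloured with colour `c`.  The palette is a finite set `K ⊆ ℕ` of
colours.  On her turn Maker must play a colour; on his turn Breaker may play a colour,
or a blank at any unplayed vertex.  The game ends as soon as no vertex can legally
receive a colour, and Maker wins iff every vertex is then coloured or blank. -/

/-- Colour `c` may legally be played at `v` (blanks put no restriction on their
neighbours). -/
def BColLegal (G : SimpleGraph V) (K : Finset ℕ) (f : V → Option (Option ℕ))
    (v : V) (c : ℕ) : Prop :=
  c ∈ K ∧ f v = none ∧ ∀ u, G.Adj v u → f u ≠ some (some c)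

/-- Every vertex is coloured or blank. -/
def AllPlayed (f : V → Option (Option ℕ)) : Prop := ∀ v, f v ≠ none

/-- Maker wins the vertex colouring game with blanks from the given position. -/
def MakerWinsB (G : SimpleGraph V) (K : Finset ℕ) :
    ℕ → (V → Option (Option ℕ)) → Bool → Prop
  | 0, f, _ => AllPlayed f
  | fuel + 1, f, true => AllPlayed f ∨
      ∃ v c, BColLegal G K f v c ∧ MakerWinsB G K fuel (update f v (some (some c))) false
  | fuel + 1, f, false =>
      ((¬ ∃ v c, BColLegal G K f v c) ∧ AllPlayed f) ∨
      ((∃ v c, BColLegal G K f v c) ∧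
        (∀ v c, BColLegal G K f v c →
          MakerWinsB G K fuel (update f v (some (some c))) true) ∧
        (∀ v, f v = none → MakerWinsB G K fuel (update f v (some none)) true))

/-- The game chromatic number with blanks `χ_gb(G)`: the least number of colours for
which Maker has a winning strategy in the vertex colouring game with blanks. -/
noncomputable def chiGb (G : SimpleGraph V) : ℕ :=
  sInf {k | MakerWinsB G (Finset.range k) (Fintype.card V) (fun _ => none) true}

/-! ### The game with blanks, with classes marked for blanks.

The extra datum is the finite set `ds` of currently marked classes.  Maker may also
play blanks at unplayed vertices of marked classes; the game does not end while some
vertex of a marked class is unplayed; and whenever Breaker plays a blank at `v` he may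
additionally remove one marked class not containing `v`. -/

/-- `v` belongs to some class marked for blanks. -/
def InMarked (ds : Finset (Finset V)) (v : V) : Prop := ∃ d ∈ ds, v ∈ d

/-- The game has ended: no colour move is available and no vertex of a class marked
for blanks is left unplayed. -/
def MEnded (G : SimpleGraph V) (K : Finset ℕ) (f : V → Option (Option ℕ))
    (ds : Finset (Finset V)) : Prop :=
  (¬ ∃ v c, BColLegal G K f v c) ∧ ∀ v, InMarked ds v → f v ≠ none

/-- Maker wins the vertex colouring game with blanks, with the classes `ds` marked
for blanks, from the given position. -/
def MakerWinsM (G : SimpleGraph V) (K : Finset ℕ) :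
    ℕ → (V → Option (Option ℕ)) → Finset (Finset V) → Bool → Prop
  | 0, f, _, _ => AllPlayed f
  | fuel + 1, f, ds, true =>
      (MEnded G K f ds ∧ AllPlayed f) ∨
      (¬ MEnded G K f ds ∧
        ((∃ v c, BColLegal G K f v c ∧
            MakerWinsM G K fuel (update f v (some (some c))) ds false) ∨
         (∃ v, f v = none ∧ InMarked ds v ∧
            MakerWinsM G K fuel (update f v (some none)) ds false)))
  | fuel + 1, f, ds, false =>
      (MEnded G K f ds ∧ AllPlayed f) ∨
      (¬ MEnded G K f ds ∧
        (∀ v c, BColLegal G K f v c →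
          MakerWinsM G K fuel (update f v (some (some c))) ds true) ∧
        (∀ v, f v = none →
          MakerWinsM G K fuel (update f v (some none)) ds true ∧
          ∀ d ∈ ds, v ∉ d →
            MakerWinsM G K fuel (update f v (some none)) (ds.erase d) true))

/-- `χ_gb(G; D₁,…,Dₛ)`: the least number of colours for which Maker has a winning
strategy in the vertex colouring game with blanks with the classes in `ds` marked for
blanks. -/
noncomputable def chiGbM (G : SimpleGraph V) (ds : Finset (Finset V)) : ℕ :=
  sInf {k | MakerWinsM G (Finset.range k) (Fintype.card V) (fun _ => none) ds true}

/-! ### Move sequences, for conditioning the game on an initial sequence of plays. -/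

/-- A move in the game with blanks: a colour at a vertex, or a blank at a vertex
together with an optional marked class which Breaker removes. -/
inductive BMove (W : Type*) where
  | color (v : W) (c : ℕ)
  | blank (v : W) (removed : Option (Finset W))
  deriving DecidableEq

/-- The vertex at which a move is made. -/
def BMove.vertex {W : Type*} : BMove W → W
  | .color v _ => v
  | .blank v _ => v

/-- The effect of a single move on a position. -/
def bStep (st : (V → Option (Option ℕ)) × Finset (Finset V)) :
    BMove V → (V → Option (Option ℕ)) × Finset (Finset V)
  | .color v c => (update st.1 v (some (some c)), st.2)
  | .blank v none => (update st.1 v (some none), st.2)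
  | .blank v (some d) => (update st.1 v (some none), st.2.erase d)

/-- The position reached after the sequence `P` of moves. -/
def bRun (st : (V → Option (Option ℕ)) × Finset (Finset V)) (P : List (BMove V)) :
    (V → Option (Option ℕ)) × Finset (Finset V) :=
  P.foldl bStep st

/-- `P` is a legal sequence of moves from the given position in the game with blanks
with marked classes (the `Bool` is the player to move, `true` = Maker). -/
def LegalSeqM (G : SimpleGraph V) (K : Finset ℕ) :
    (V → Option (Option ℕ)) → Finset (Finset V) → Bool → List (BMove V) → Prop
  | _, _, _, [] => True
  | f, ds, true, BMove.color v c :: rest =>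
      ¬ MEnded G K f ds ∧ BColLegal G K f v c ∧
        LegalSeqM G K (update f v (some (some c))) ds false rest
  | f, ds, true, BMove.blank v r :: rest =>
      ¬ MEnded G K f ds ∧ f v = none ∧ InMarked ds v ∧ r = none ∧
        LegalSeqM G K (update f v (some none)) ds false rest
  | f, ds, false, BMove.color v c :: rest =>
      ¬ MEnded G K f ds ∧ BColLegal G K f v c ∧
        LegalSeqM G K (update f v (some (some c))) ds true rest
  | f, ds, false, BMove.blank v none :: rest =>
      ¬ MEnded G K f ds ∧ f v = none ∧
        LegalSeqM G K (update f v (some none)) ds true rest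
  | f, ds, false, BMove.blank v (some d) :: rest =>
      ¬ MEnded G K f ds ∧ f v = none ∧ d ∈ ds ∧ v ∉ d ∧
        LegalSeqM G K (update f v (some none)) (ds.erase d) true rest

/-- `χ_gb(G; ds | P)`: the least number of colours for which Maker has a winning
strategy in the vertex colouring game with blanks with the classes `ds` marked for
blanks, conditioned on the game starting with the sequence `P` of moves. -/
noncomputable def chiGbMCond (G : SimpleGraph V) (ds : Finset (Finset V))
    (P : List (BMove V)) : ℕ :=
  sInf {n | ∃ K : Finset ℕ, K.card = n ∧
    LegalSeqM G K (fun _ => none) ds true P ∧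
    MakerWinsM G K (Fintype.card V - P.length) (bRun (fun _ => none, ds) P).1
      (bRun (fun _ => none, ds) P).2 (decide (P.length % 2 = 0))}

/-! ### The marking game. -/

/-- `v` may legally be marked: it is unmarked and has at most `k - 1` marked
neighbours. -/
def MarkLegal (G : SimpleGraph V) (k : ℕ) (M : Set V) (v : V) : Prop :=
  v ∉ M ∧ (M ∩ {u | G.Adj v u}).ncard < k

/-- Maker wins the marking game from the given position. -/
def MakerWinsMark (G : SimpleGraph V) (k : ℕ) : ℕ → Set V → Bool → Prop
  | 0, M, _ => ∀ v, v ∈ M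
  | fuel + 1, M, true => (∀ v, v ∈ M) ∨
      ∃ v, MarkLegal G k M v ∧ MakerWinsMark G k fuel (insert v M) false
  | fuel + 1, M, false => (∀ v, v ∈ M) ∨
      ((∃ v, MarkLegal G k M v) ∧
        ∀ v, MarkLegal G k M v → MakerWinsMark G k fuel (insert v M) true)

/-- The marking number (game colouring number) `m(G)`: the least `k` for which Maker
has a winning strategy in the marking game. -/
noncomputable def markingNumber (G : SimpleGraph V) : ℕ :=
  sInf {k | MakerWinsMark G k (Fintype.card V) ∅ true}

/-! Maker's strategy on a graph with an independent vertex cover `L` of at most two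
vertices: she colours one vertex of `L` and, if Breaker has not played the other one
meanwhile, colours it next, avoiding the colour of Breaker's reply. Once `L` is played,
every unplayed vertex has all its neighbours in `L`, hence fewer coloured neighbours
than there are colours, so it can always be coloured and the game cannot get stuck. -/

theorem _root_.SimpleGraph.IsIndepSet.preimage {U X : Type*} {G : SimpleGraph U}
    {G' : SimpleGraph X} (φ : G →g G') {s : Set X} (hs : G'.IsIndepSet s) :
    G.IsIndepSet (φ ⁻¹' s) :=
  fun _ hu _ hw _ hadj => hs hu hw (φ.map_adj hadj).ne (φ.map_adj hadj)

theorem isVertexCover_completeBipartiteGraph_range_inl {α β : Type*} :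
    (completeBipartiteGraph α β).IsVertexCover (Set.range Sum.inl) := by
  rintro (a | b) (a' | b') h <;> simp_all

theorem isIndepSet_completeBipartiteGraph_range_inl {α β : Type*} :
    (completeBipartiteGraph α β).IsIndepSet (Set.range Sum.inl) := by
  rintro _ ⟨a, rfl⟩ _ ⟨a', rfl⟩ _ h
  simp at h

open Finset

def unplayed (g : V → Option (Option ℕ)) : Finset V := univ.filter (g · = none)

section Strategy

variable {G : SimpleGraph V} {K : Finset ℕ} {g : V → Option (Option ℕ)} {L S : Finset V}
  {v b : V} {n : ℕ} {p : Bool}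

omit [DecidableEq V] in
@[simp]
theorem mem_unplayed : v ∈ unplayed g ↔ g v = none := by
  simp [unplayed]

omit [DecidableEq V] in
theorem card_unplayed_const_none : #(unplayed (fun _ : V => none)) = Fintype.card V := by
  simp [unplayed]

omit [DecidableEq V] in
theorem exists_eq_add_one_of_unplayed (hv : g v = none) (hn : #(unplayed g) ≤ n) :
    ∃ m, n = m + 1 :=
  Nat.exists_eq_add_one_of_ne_zero (by
    have := card_pos.2 ⟨v, mem_unplayed.2 hv⟩
    omega)

theorem card_unplayed_update_le {x : Option ℕ} (hv : g v = none)
    (hn : #(unplayed g) ≤ n + 1) : #(unplayed (update g v (some x))) ≤ n := by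
  have : unplayed (update g v (some x)) = (unplayed g).erase v := by
    ext u
    rcases eq_or_ne u v with rfl | huv <;> simp [*]
  rw [this, card_erase_of_mem (mem_unplayed.2 hv)]
  omega

omit [Fintype V] in
theorem update_some_ne_none {w : V} (x : Option ℕ) (hw : g w ≠ none) :
    update g v (some x) w ≠ none := by
  rcases eq_or_ne w v with rfl | hwv <;> simp [*]

omit [Fintype V] [DecidableEq V] in
theorem exists_bColLegal_of_card_lt (hv : g v = none)
    (hS : ∀ u c, G.Adj v u → g u = some (some c) → u ∈ S) (hSK : #S < #K) :
    ∃ c, BColLegal G K g v c := by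
  have hcard : #(S.image fun u => (g u).join) < #(K.image some) := by
    rw [card_image_of_injective _ (Option.some_injective ℕ)]
    exact card_image_le.trans_lt hSK
  obtain ⟨_, hc, hfree⟩ := exists_mem_notMem_of_card_lt_card hcard
  obtain ⟨c, hcK, rfl⟩ := mem_image.1 hc
  exact ⟨c, hcK, hv, fun u hu hcol =>
    hfree (mem_image.2 ⟨u, hS u c hu hcol, by simp [hcol]⟩)⟩

theorem makerWinsB_of_vertexCover_played (hL : G.IsVertexCover L) (hLK : #L < #K)
    (hLg : ∀ w ∈ L, g w ≠ none) (hn : #(unplayed g) ≤ n) : MakerWinsB G K n g p := by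
  induction n generalizing g p with
  | zero =>
    have hAP : AllPlayed g := fun v hv => by
      obtain ⟨m, hm⟩ := exists_eq_add_one_of_unplayed hv hn
      omega
    cases p <;> exact hAP
  | succ n ih =>
    have hmove : ∀ v x p', g v = none → MakerWinsB G K n (update g v (some x)) p' :=
      fun v x _ hv => ih (fun w hw => update_some_ne_none x (hLg w hw))
        (card_unplayed_update_le hv hn)
    by_cases hAP : AllPlayed g
    · cases p
      · exact Or.inl ⟨fun ⟨v, _, hc⟩ => hAP v hc.2.1, hAP⟩
      · exact Or.inl hAP
    obtain ⟨v, hv⟩ : ∃ v, g v = none := by simpa [AllPlayed] using hAP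
    obtain ⟨c, hc⟩ := exists_bColLegal_of_card_lt (S := L) hv
      (fun u _ huv _ => (hL huv).resolve_left fun hvL => hLg v hvL hv) hLK
    cases p
    · exact Or.inr ⟨⟨v, c, hc⟩, fun v' _ hc' => hmove v' _ _ hc'.2.1,
        fun v' hv' => hmove v' none _ hv'⟩
    · exact Or.inr ⟨v, c, hc, hmove v _ _ hv⟩

theorem makerWinsB_true_of_vertexCover_played_except (hL : G.IsVertexCover L)
    (hLK : #L < #K) (hLg : ∀ w ∈ L, w ≠ b → g w ≠ none)
    (hS : ∀ u c, G.Adj b u → g u = some (some c) → u ∈ S) (hSK : #S < #K)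
    (hn : #(unplayed g) ≤ n) : MakerWinsB G K n g true := by
  by_cases hb : g b = none
  · obtain ⟨c, hc⟩ := exists_bColLegal_of_card_lt hb hS hSK
    obtain ⟨n, rfl⟩ := exists_eq_add_one_of_unplayed hb hn
    refine Or.inr ⟨b, c, hc, makerWinsB_of_vertexCover_played hL hLK (fun w hw => ?_)
      (card_unplayed_update_le hb hn)⟩
    rcases eq_or_ne w b with rfl | hwb
    · simp
    · exact update_some_ne_none _ (hLg w hw hwb)
  · refine makerWinsB_of_vertexCover_played hL hLK (fun w hw => ?_) hn
    rcases eq_or_ne w b with rfl | hwb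
    exacts [hb, hLg w hw hwb]

theorem makerWinsB_false_of_vertexCover_played_except (hL : G.IsVertexCover L)
    (hLK : #L < #K) (hbL : b ∈ L) (hLg : ∀ w ∈ L, w ≠ b → g w ≠ none)
    (hb : ∀ u c, G.Adj b u → g u ≠ some (some c))
    (hn : #(unplayed g) ≤ n) : MakerWinsB G K n g false := by
  by_cases hbg : g b = none
  · obtain ⟨n, rfl⟩ := exists_eq_add_one_of_unplayed hbg hn
    have hK : 1 < #K := by
      have := card_pos.2 ⟨b, hbL⟩
      omega
    have reply : ∀ v x, g v = none → MakerWinsB G K n (update g v (some x)) true :=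
      fun v x hv => makerWinsB_true_of_vertexCover_played_except (S := {v}) hL hLK
        (fun w hw hwb => update_some_ne_none x (hLg w hw hwb))
        (fun u c hu hcol => by
          by_contra huv
          rw [update_apply, if_neg (by simpa using huv)] at hcol
          exact hb u c hu hcol)
        (by simpa using hK) (card_unplayed_update_le hv hn)
    obtain ⟨c, hc⟩ := exists_bColLegal_of_card_lt (K := K) (S := ∅) hbg
      (fun u c hu hcol => absurd hcol (hb u c hu)) (by rw [card_empty]; omega)
    exact Or.inr ⟨⟨b, c, hc⟩, fun v _ hc => reply v _ hc.2.1, fun v hv => reply v none hv⟩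
  · refine makerWinsB_of_vertexCover_played hL hLK (fun w hw => ?_) hn
    rcases eq_or_ne w b with rfl | hwb
    exacts [hbg, hLg w hw hwb]

theorem makerWinsB_of_isIndepSet_of_isVertexCover (hLi : G.IsIndepSet L)
    (hL : G.IsVertexCover L) (hL2 : #L ≤ 2) (hK : 2 < #K) :
    MakerWinsB G K (Fintype.card V) (fun _ => none) true := by
  have hLK : #L < #K := by omega
  rcases L.eq_empty_or_nonempty with rfl | ⟨a, ha⟩
  · exact makerWinsB_of_vertexCover_played hL hLK (by simp) card_unplayed_const_none.le
  obtain ⟨b, hbL, hLab⟩ : ∃ b ∈ L, ∀ w ∈ L, w ≠ a → w = b := by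
    by_cases h : ∃ b ∈ L, b ≠ a
    · obtain ⟨b, hbL, hba⟩ := h
      refine ⟨b, hbL, fun w hw hwa => card_le_one.1 ?_ w (mem_erase.2 ⟨hwa, hw⟩) b
        (mem_erase.2 ⟨hba, hbL⟩)⟩
      rw [card_erase_of_mem ha]
      omega
    · push Not at h
      exact ⟨a, ha, fun w hw hwa => absurd (h w hw) hwa⟩
  obtain ⟨c, hcK⟩ : K.Nonempty := card_pos.1 (by omega)
  obtain ⟨n, hn⟩ := exists_eq_add_one_of_unplayed (g := fun _ : V => none) (v := a) rfl
    card_unplayed_const_none.le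
  rw [hn]
  refine Or.inr ⟨a, c, ⟨hcK, rfl, fun _ _ => by simp⟩,
    makerWinsB_false_of_vertexCover_played_except hL hLK hbL (fun w hw hwb => ?_)
      (fun u c' hu hcol => ?_)
      (card_unplayed_update_le rfl (by rw [card_unplayed_const_none, hn]))⟩
  · obtain rfl : w = a := by_contra fun hwa => hwb (hLab w hw hwa)
    simp
  · obtain rfl : u = a := by_contra fun hua => by simp [hua] at hcol
    exact hLi hbL ha (G.ne_of_adj hu) hu

theorem chiGb_le_three_of_isIndepSet_of_isVertexCover (hLi : G.IsIndepSet L)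
    (hL : G.IsVertexCover L) (hL2 : #L ≤ 2) : chiGb G ≤ 3 :=
  Nat.sInf_le (makerWinsB_of_isIndepSet_of_isVertexCover hLi hL hL2 (by simp))

end Strategy

theorem chiGb_le_three_of_subgraph_K2r_general (r : ℕ)
    {W : Type*} [Fintype W] [DecidableEq W] (H : SimpleGraph W)
    (f : W ↪ (Fin 2 ⊕ Fin r))
    (hf : ∀ u v, H.Adj u v → (completeBipartiteGraph (Fin 2) (Fin r)).Adj (f u) (f v)) :
    chiGb H ≤ 3 := by
  let φ : H →g completeBipartiteGraph (Fin 2) (Fin r) := ⟨f, hf _ _⟩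
  let L : Finset W := univ.filter fun w => (f w).isLeft
  have hL : (L : Set W) = φ ⁻¹' Set.range Sum.inl := by
    ext w
    simp only [L, φ, coe_filter, mem_univ, true_and, Set.mem_ofPred_eq, Set.mem_preimage,
      RelHom.coeFn_mk, Set.mem_range, Sum.isLeft_iff]
    exact exists_congr fun _ => eq_comm
  have hL2 : #L ≤ 2 := by
    have : L.map f ⊆ univ.map Embedding.inl := by
      simp only [subset_iff, mem_map, mem_univ, true_and, Embedding.inl_apply]
      rintro _ ⟨w, hw, rfl⟩
      obtain ⟨a, ha⟩ := Sum.isLeft_iff.1 (mem_filter.1 hw).2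
      exact ⟨a, ha.symm⟩
    simpa using card_le_card this
  refine chiGb_le_three_of_isIndepSet_of_isVertexCover (L := L) ?_ ?_ hL2
  · rw [hL]
    exact isIndepSet_completeBipartiteGraph_range_inl.preimage φ
  · rw [hL]
    exact isVertexCover_completeBipartiteGraph_range_inl.preimage φ

/-- For any `r ≥ 1` and any subgraph `H` of the complete bipartite
graph `K_{2,r}` (i.e. any graph embedding into `K_{2,r}` as a subgraph), we have
`χ_gb(H) ≤ 3`. -/
theorem chiGb_le_three_of_subgraph_K2r (r : ℕ) (hr : 1 ≤ r)
    {W : Type*} [Fintype W] [DecidableEq W] (H : SimpleGraph W)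
    (f : W ↪ (Fin 2 ⊕ Fin r))
    (hf : ∀ u v, H.Adj u v → (completeBipartiteGraph (Fin 2) (Fin r)).Adj (f u) (f v)) :
    chiGb H ≤ 3 :=
  chiGb_le_three_of_subgraph_K2r_general r H f hf

end GameCol
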